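/- arXiv:2205.15066 — 2 statements merged into one kernel-verified Lean document; each statement's English description precedes it below -/
import Mathlib

section
/- Vertex cover dominance rule: if u and v are adjacent vertices of a graph G with N[v] ⊆ N[u], then there exists a minimum vertex cover of G containing u. -/
open SimpleGraph

/-!
Take a minimum vertex cover `S`. If `u ∉ S`, then `v ∈ S` because of the edge `uv`, and every
neighbour of `u` lies in `S`. Since `N(v) ⊆ N[u]`, every neighbour of `v` then lies in `S ∪ {u}`,
so trading `v` for `u` yields a vertex cover `(S \ {v}) ∪ {u}` of the same size.
-/

namespace SimpleGraph

open Finset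

variable {V : Type*} {G : SimpleGraph V}

theorem IsVertexCover.neighborSet_subset_insert {c : Set V} {u v : V} (hc : G.IsVertexCover c)
    (hu : u ∉ c) (hdom : G.neighborSet v ⊆ insert u (G.neighborSet u)) :
    G.neighborSet v ⊆ insert u c := fun w hw => by
  rcases hdom hw with rfl | huw
  · exact Set.mem_insert _ _
  · exact Set.mem_insert_of_mem _ ((hc huw).resolve_left hu)

theorem IsVertexCover.insert_diff_singleton {c : Set V} {u v : V} (hc : G.IsVertexCover c)
    (hv : G.neighborSet v ⊆ insert u c) : G.IsVertexCover (insert u (c \ {v})) := by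
  have hnbr : ∀ w, G.Adj v w → w ∈ insert u (c \ {v}) := fun w hvw => by
    rcases hv hvw with rfl | hwc
    · exact Set.mem_insert _ _
    · exact Set.mem_insert_of_mem _ ⟨hwc, hvw.ne'⟩
  intro a b hab
  by_cases hav : a = v
  · subst hav
    exact Or.inr (hnbr b hab)
  by_cases hbv : b = v
  · subst hbv
    exact Or.inl (hnbr a hab.symm)
  rcases hc hab with ha | hb
  · exact Or.inl (Set.mem_insert_of_mem _ ⟨ha, hav⟩)
  · exact Or.inr (Set.mem_insert_of_mem _ ⟨hb, hbv⟩)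

variable (G) in
def IsMinimumVertexCover (S : Finset V) : Prop :=
  G.IsVertexCover S ∧ ∀ T : Finset V, G.IsVertexCover T → #S ≤ #T

theorem exists_isMinimumVertexCover (h : ∃ S : Finset V, G.IsVertexCover S) :
    ∃ S, G.IsMinimumVertexCover S := by
  obtain ⟨S, hS, hmin⟩ := (measure Finset.card).wf.has_min {S : Finset V | G.IsVertexCover S} h
  exact ⟨S, hS, fun T hT => not_lt.mp (hmin T hT)⟩

theorem IsMinimumVertexCover.of_card_le {S T : Finset V} (hS : G.IsMinimumVertexCover S)
    (hT : G.IsVertexCover T) (hcard : #T ≤ #S) : G.IsMinimumVertexCover T :=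
  ⟨hT, fun R hR => hcard.trans (hS.2 R hR)⟩

theorem IsMinimumVertexCover.insert_erase [DecidableEq V] {S : Finset V} {u v : V}
    (hS : G.IsMinimumVertexCover S) (hu : u ∉ S) (huv : G.Adj u v)
    (hdom : G.neighborSet v ⊆ insert u (G.neighborSet u)) :
    G.IsMinimumVertexCover (insert u (S.erase v)) := by
  have hv : v ∈ S := (hS.1 huv).resolve_left hu
  have hcover : G.IsVertexCover ↑(insert u (S.erase v)) := by
    rw [coe_insert, coe_erase]
    exact hS.1.insert_diff_singleton (hS.1.neighborSet_subset_insert hu hdom)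
  refine hS.of_card_le hcover ?_
  calc #(insert u (S.erase v)) ≤ #(S.erase v) + 1 := card_insert_le _ _
    _ = #S := card_erase_add_one hv

end SimpleGraph

theorem stmt6_general {V : Type*} [Fintype V] (G : SimpleGraph V) (u v : V)
    (huv : G.Adj u v)
    (hdom : insert v (G.neighborSet v) ⊆ insert u (G.neighborSet u)) :
    ∃ S : Finset V,
      (∀ ⦃a b : V⦄, G.Adj a b → a ∈ S ∨ b ∈ S) ∧
      (∀ T : Finset V, (∀ ⦃a b : V⦄, G.Adj a b → a ∈ T ∨ b ∈ T) → S.card ≤ T.card) ∧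
      u ∈ S := by
  classical
  obtain ⟨S, hS⟩ := G.exists_isMinimumVertexCover ⟨Finset.univ, by simp [IsVertexCover]⟩
  by_cases hu : u ∈ S
  · exact ⟨S, hS.1, hS.2, hu⟩
  obtain ⟨hcover, hmin⟩ := hS.insert_erase hu huv ((Set.subset_insert _ _).trans hdom)
  exact ⟨_, hcover, hmin, Finset.mem_insert_self u _⟩

/-- Dominance rule for vertex cover: if `u` and `v` are adjacent and `N[v] ⊆ N[u]`,
then some minimum vertex cover of `G` contains `u`. -/
theorem stmt6 {V : Type*} [Fintype V] [DecidableEq V] (G : SimpleGraph V) (u v : V)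
    (huv : G.Adj u v)
    (hdom : insert v (G.neighborSet v) ⊆ insert u (G.neighborSet u)) :
    ∃ S : Finset V,
      (∀ ⦃a b : V⦄, G.Adj a b → a ∈ S ∨ b ∈ S) ∧
      (∀ T : Finset V, (∀ ⦃a b : V⦄, G.Adj a b → a ∈ T ∨ b ∈ T) → S.card ≤ T.card) ∧
      u ∈ S :=
  stmt6_general G u v huv hdom
end

section
/- If u dominates v in G (u adjacent to v and N[v] ⊆ N[u]), then the minimum vertex cover size of G equals 1 plus the minimum vertex cover size of G - u (the graph with vertex u and its incident edges removed). -/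
/-!
If a minimum vertex cover misses `u`, it contains every neighbour of `u`, hence every vertex of
`N[v]` other than `u`; exchanging `v` for `u` keeps it a cover of the same size. So some minimum
cover contains `u`, and removing `u` from it covers `G - u`. Conversely, adding `u` to a cover
of `G - u` covers `G`.
-/

open SimpleGraph

/-- The vertex cover number: the minimum size of a set of vertices meeting every edge. -/
noncomputable def tau {W : Type*} [Fintype W] (G : SimpleGraph W) : ℕ :=
  sInf {k | ∃ S : Finset W, S.card = k ∧ ∀ ⦃a b : W⦄, G.Adj a b → a ∈ S ∨ b ∈ S}

namespace SimpleGraph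

variable {V : Type*} {G : SimpleGraph V}

theorem IsVertexCover.union_compl_of_induce {s : Set V} {c : Set s}
    (hc : (G.induce s).IsVertexCover c) : G.IsVertexCover (Subtype.val '' c ∪ sᶜ) := by
  intro a b hab
  by_cases ha : a ∈ s
  · by_cases hb : b ∈ s
    · rcases hc (v := ⟨a, ha⟩) (w := ⟨b, hb⟩) hab with h | h
      · exact .inl (.inl ⟨_, h, rfl⟩)
      · exact .inr (.inl ⟨_, h, rfl⟩)
    · exact .inr (.inr hb)
  · exact .inl (.inr ha)

theorem vertexCoverNum_le_induce_add_encard_compl (s : Set V) :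
    G.vertexCoverNum ≤ (G.induce s).vertexCoverNum + sᶜ.encard := by
  obtain ⟨c, hc, hcov⟩ := (G.induce s).vertexCoverNum_exists
  calc G.vertexCoverNum
      ≤ (Subtype.val '' c ∪ sᶜ).encard := hcov.union_compl_of_induce.vertexCoverNum_le
    _ ≤ (Subtype.val '' c).encard + sᶜ.encard := Set.encard_union_le _ _
    _ = (G.induce s).vertexCoverNum + sᶜ.encard := by
        rw [Subtype.val_injective.encard_image, hc]

theorem IsVertexCover.vertexCoverNum_induce_add_encard_sdiff_le {c : Set V}
    (hc : G.IsVertexCover c) (s : Set V) :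
    (G.induce s).vertexCoverNum + (c \ s).encard ≤ c.encard := by
  calc (G.induce s).vertexCoverNum + (c \ s).encard
      ≤ (Subtype.val ⁻¹' c : Set s).encard + (c \ s).encard := by
        gcongr
        exact (hc.preimage (Embedding.induce s)).vertexCoverNum_le
    _ = (c ∩ s).encard + (c \ s).encard := by
        rw [← Subtype.val_injective.encard_image, Subtype.image_preimage_coe, Set.inter_comm]
    _ = c.encard := by rw [add_comm, Set.encard_sdiff_add_encard_inter]

theorem IsVertexCover.insert_sdiff_singleton_of_dominates {u v : V}
    (hdom : insert v (G.neighborSet v) ⊆ insert u (G.neighborSet u)) {c : Set V}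
    (hc : G.IsVertexCover c) (hu : u ∉ c) : G.IsVertexCover (insert u (c \ {v})) := by
  have hnbr : G.neighborSet u ⊆ c := fun w huw => (hc huw).resolve_left hu
  have key : ∀ ⦃a b⦄, G.Adj a b → a ∈ c →
      a ∈ insert u (c \ {v}) ∨ b ∈ insert u (c \ {v}) := by
    intro a b hab ha
    by_cases hav : a = v
    · subst hav
      rcases hdom (Set.mem_insert_of_mem _ hab) with rfl | hub
      · exact .inr (Set.mem_insert _ _)
      · exact .inr (.inr ⟨hnbr hub, hab.ne'⟩)
    · exact .inl (.inr ⟨ha, hav⟩)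
  intro a b hab
  rcases hc hab with ha | hb
  · exact key hab ha
  · exact (key hab.symm hb).symm

theorem IsVertexCover.exists_mem_encard_le_of_dominates {u v : V} (huv : G.Adj u v)
    (hdom : insert v (G.neighborSet v) ⊆ insert u (G.neighborSet u)) {c : Set V}
    (hc : G.IsVertexCover c) : ∃ c', u ∈ c' ∧ G.IsVertexCover c' ∧ c'.encard ≤ c.encard := by
  by_cases hu : u ∈ c
  · exact ⟨c, hu, hc, le_rfl⟩
  have hv : v ∈ c := (hc huv).resolve_left hu
  refine ⟨insert u (c \ {v}), Set.mem_insert _ _,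
    hc.insert_sdiff_singleton_of_dominates hdom hu, ?_⟩
  rw [Set.encard_insert_of_notMem (fun h => hu h.1), Set.encard_sdiff_singleton_add_one hv]

theorem vertexCoverNum_eq_induce_compl_singleton_add_one_of_dominates {u v : V}
    (huv : G.Adj u v) (hdom : insert v (G.neighborSet v) ⊆ insert u (G.neighborSet u)) :
    G.vertexCoverNum = (G.induce {u}ᶜ).vertexCoverNum + 1 := by
  refine le_antisymm (by simpa using G.vertexCoverNum_le_induce_add_encard_compl {u}ᶜ) ?_
  obtain ⟨c, hc, hcov⟩ := G.vertexCoverNum_exists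
  obtain ⟨c', hu, hcov', hle⟩ := hcov.exists_mem_encard_le_of_dominates huv hdom
  calc (G.induce {u}ᶜ).vertexCoverNum + 1
      = (G.induce {u}ᶜ).vertexCoverNum + (c' \ {u}ᶜ).encard := by
        rw [Set.sdiff_compl, Set.inter_singleton_of_mem hu, Set.encard_singleton]
    _ ≤ c'.encard := hcov'.vertexCoverNum_induce_add_encard_sdiff_le _
    _ ≤ G.vertexCoverNum := hc ▸ hle

end SimpleGraph

theorem coe_tau {W : Type*} [Fintype W] (G : SimpleGraph W) :
    (tau G : ℕ∞) = G.vertexCoverNum := by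
  refine le_antisymm ?_ ?_
  · obtain ⟨c, hc, hcov⟩ := G.vertexCoverNum_exists
    rw [← hc, (Set.toFinite c).encard_eq_coe_toFinset_card]
    exact_mod_cast (Nat.sInf_le ⟨_, rfl, fun a b hab => by simpa using hcov hab⟩ : tau G ≤ _)
  · obtain ⟨S, hS, hcov⟩ := Nat.sInf_mem (s := {k | ∃ S : Finset W, S.card = k ∧
        ∀ ⦃a b : W⦄, G.Adj a b → a ∈ S ∨ b ∈ S})
      ⟨_, Finset.univ, rfl, fun a _ _ => .inl (Finset.mem_univ a)⟩
    calc G.vertexCoverNum ≤ (S : Set W).encard := IsVertexCover.vertexCoverNum_le hcov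
      _ = tau G := by rw [Set.encard_coe_eq_coe_finsetCard, hS]; rfl

/-- If `u` dominates `v` (they are adjacent and `N[v] ⊆ N[u]`), then
`τ(G) = 1 + τ(G - u)`. -/
theorem stmt7 {V : Type*} [Fintype V] [DecidableEq V] (G : SimpleGraph V) (u v : V)
    (huv : G.Adj u v)
    (hdom : insert v (G.neighborSet v) ⊆ insert u (G.neighborSet u)) :
    tau G = 1 + tau (G.induce {w : V | w ≠ u}) := by
  have h := G.vertexCoverNum_eq_induce_compl_singleton_add_one_of_dominates huv hdom
  rw [Set.compl_singleton_eq, ← coe_tau, ← coe_tau, add_comm] at h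
  exact_mod_cast h
end
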